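/- Let k > l be natural numbers with Δ = k − l ≥ 1, fix n₀ with l ≤ n₀ < k, and set γ_r = β^{lk}_{n₀+rΔ}. Then the ratio γ_{r+1}/γ_{r+2} satisfies γ_{r+1}/γ_{r+2} = 1 − (k+l)/(2r) + o(1/r) as r → ∞; that is, lim_{r→∞} r·(γ_{r+1}/γ_{r+2} − 1 + (k+l)/(2r)) = 0. -/

import Mathlib

/-- Pochhammer symbol `(x,s) = x(x+1)⋯(x+s-1)` for an integer starting value. -/
def poch (x : ℤ) (s : ℕ) : ℤ := ∏ i ∈ Finset.range s, (x + i)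

/-- `β^{kl}_n = sqrt((n-l+1,l)·(n-l+1,k))`; `betaKL l k n` is `β^{lk}_n`. -/
noncomputable def betaKL (k l n : ℕ) : ℝ :=
  Real.sqrt (((poch ((n : ℤ) - l + 1) l * poch ((n : ℤ) - l + 1) k : ℤ) : ℝ))

/-
Put `a = n - k + 1` with `n = n₀ + (r + 1)Δ`. Splitting `(a, k + Δ)` at `k` and at `Δ` gives
`(a, k)(a + k, Δ) = (a, Δ)(a + Δ, k)`, and likewise for `l`; hence the ratio `γ_{r+1}/γ_{r+2}`
telescopes to `∏_{j<Δ} (a + j)/√((a + j + k)(a + j + l))` as soon as `a > 0`. Each factor is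
`t/√((t + k)(t + l)) = 1 - (k + l)/(2t) + o(1/t)` with `t = a + j ~ Δr`, and a product of
`Δ` factors `1 + c_j/t + o(1/t)` is `1 + (∑ c_j)/t + o(1/t)`, so the first-order term is
`-Δ(k + l)/(2Δr)`.
-/

open Filter Finset Real Topology

lemma poch_add (x : ℤ) (s d : ℕ) : poch x (s + d) = poch x s * poch (x + s) d := by
  simp only [poch, prod_range_add, Nat.cast_add, add_assoc]

lemma poch_pos {x : ℤ} (hx : 0 < x) (s : ℕ) : 0 < poch x s :=
  prod_pos fun i _ => by positivity

lemma poch_mul_poch_add_comm (x : ℤ) (s d : ℕ) :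
    poch x s * poch (x + s) d = poch x d * poch (x + d) s := by
  rw [← poch_add, ← poch_add, add_comm]

lemma sqrt_poch_div_sqrt_poch {x : ℤ} (hx : 0 < x) (k l d : ℕ) :
    √(poch x k * poch x l : ℤ) / √(poch (x + d) k * poch (x + d) l : ℤ)
      = ∏ j ∈ range d, ((x + j : ℝ) / √((x + j + k) * (x + j + l))) := by
  have hxd : 0 < x + d := by positivity
  have key : poch x k * poch x l * (poch (x + k) d * poch (x + l) d)
      = poch x d ^ 2 * (poch (x + d) k * poch (x + d) l) := by
    linear_combination (poch x l * poch (x + l) d) * poch_mul_poch_add_comm x k d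
      + (poch x d * poch (x + d) k) * poch_mul_poch_add_comm x l d
  have hD : 0 < ((poch (x + k) d * poch (x + l) d : ℤ) : ℝ) := by
    exact_mod_cast mul_pos (poch_pos (by positivity) _) (poch_pos (by positivity) _)
  have hY : 0 < ((poch (x + d) k * poch (x + d) l : ℤ) : ℝ) := by
    exact_mod_cast mul_pos (poch_pos hxd _) (poch_pos hxd _)
  have hN : 0 ≤ ((poch x d : ℤ) : ℝ) := by exact_mod_cast (poch_pos hx d).le
  have hXY : ((poch x k * poch x l : ℤ) : ℝ) / (poch (x + d) k * poch (x + d) l : ℤ)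
      = (poch x d : ℝ) ^ 2 / (poch (x + k) d * poch (x + l) d : ℤ) := by
    rw [div_eq_div_iff hY.ne' hD.ne']
    exact_mod_cast key
  rw [← sqrt_div' _ hY.le, hXY, sqrt_div' _ hD.le, sqrt_sq hN, prod_div_distrib]
  rw [← sqrt_prod _ fun j _ => by positivity, prod_mul_distrib]
  simp only [poch]
  push_cast
  simp only [add_right_comm]

lemma betaKL_div_betaKL_add (k l n d : ℕ) (hkn : k ≤ n) :
    betaKL l k n / betaKL l k (n + d)
      = ∏ j ∈ range d,
          ((n - k + 1 + j : ℝ) / √((n - k + 1 + j + k) * (n - k + 1 + j + l))) := by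
  have hx : 0 < (n : ℤ) - k + 1 := by omega
  have hshift : ((n + d : ℕ) : ℤ) - k + 1 = ((n : ℤ) - k + 1) + d := by push_cast; ring
  rw [betaKL, betaKL, hshift, sqrt_poch_div_sqrt_poch hx]
  push_cast
  rfl

lemma betaKL_div_betaKL_arith (k l n₀ Δ r : ℕ) (hkn : k ≤ n₀ + (r + 1) * Δ) :
    betaKL l k (n₀ + (r + 1) * Δ) / betaKL l k (n₀ + (r + 2) * Δ)
      = ∏ j ∈ range Δ, (Δ * r + (n₀ + Δ - k + 1 + j : ℝ)) /
          √((Δ * r + ((n₀ + Δ - k + 1 + j : ℝ) + k)) *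
            (Δ * r + ((n₀ + Δ - k + 1 + j : ℝ) + l))) := by
  rw [show n₀ + (r + 2) * Δ = n₀ + (r + 1) * Δ + Δ by ring, betaKL_div_betaKL_add _ _ _ _ hkn]
  refine prod_congr rfl fun j _ => ?_
  rw [show ((n₀ + (r + 1) * Δ : ℕ) : ℝ) - k + 1 + j = Δ * r + (n₀ + Δ - k + 1 + j) by
    push_cast; ring]
  simp only [add_assoc]

lemma tendsto_mul_div_sqrt_sub_one (a b d : ℝ) :
    Tendsto (fun t : ℝ => t * ((t + d) / √((t + a) * (t + b)) - 1)) atTop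
      (𝓝 (d - (a + b) / 2)) := by
  set v : ℝ → ℝ := fun t => (1 + a * t⁻¹) * (1 + b * t⁻¹)
  have hv : Tendsto v atTop (𝓝 1) := by
    simpa using ((tendsto_inv_atTop_zero.const_mul a).const_add 1).mul
      ((tendsto_inv_atTop_zero.const_mul b).const_add 1)
  have hu : Tendsto (fun t => √(v t)) atTop (𝓝 1) := by simpa using hv.sqrt
  -- `√v t = √((t + a)(t + b)) / t`, and `t (1 - v t) = -(a + b) - ab/t`
  have hlim : Tendsto (fun t => ((-(a + b) - a * b * t⁻¹) / (1 + √(v t)) + d) / √(v t)) atTop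
      (𝓝 (d - (a + b) / 2)) := by
    rw [show d - (a + b) / 2 = ((-(a + b) - a * b * 0) / (1 + 1) + d) / 1 by ring]
    exact ((((tendsto_inv_atTop_zero.const_mul (a * b)).const_sub (-(a + b))).div
      (hu.const_add 1) (by norm_num)).add_const d).div hu one_ne_zero
  refine hlim.congr' ?_
  filter_upwards [eventually_gt_atTop 0, hv.eventually (lt_mem_nhds one_pos)] with t ht hvt
  have hs2 : √(v t) ^ 2 = v t := sq_sqrt hvt.le
  have hv' : t ^ 2 * v t = (t + a) * (t + b) := by simp only [v]; field_simp
  have hS : √((t + a) * (t + b)) = t * √(v t) := by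
    rw [← hv', sqrt_mul (sq_nonneg t), sqrt_sq ht.le]
  rw [hS]
  field_simp
  linear_combination t ^ 2 * hs2 + hv'

section

variable {α ι : Type*} {l : Filter α} {g : α → ℝ}

lemma tendsto_one_of_tendsto_mul_sub_one (hg : Tendsto g l atTop) {f : α → ℝ} {L : ℝ}
    (h : Tendsto (fun x => g x * (f x - 1)) l (𝓝 L)) : Tendsto f l (𝓝 1) := by
  have h0 : Tendsto (fun x => (g x)⁻¹ * (g x * (f x - 1)) + 1) l (𝓝 (0 * L + 1)) :=
    (hg.inv_tendsto_atTop.mul h).add_const 1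
  rw [zero_mul, zero_add] at h0
  refine h0.congr' ?_
  filter_upwards [hg.eventually_ne_atTop 0] with x hx
  field_simp
  ring

lemma tendsto_mul_prod_sub_one (hg : Tendsto g l atTop) (s : Finset ι) {f : ι → α → ℝ}
    {L : ι → ℝ} (h : ∀ i ∈ s, Tendsto (fun x => g x * (f i x - 1)) l (𝓝 (L i))) :
    Tendsto (fun x => g x * (∏ i ∈ s, f i x - 1)) l (𝓝 (∑ i ∈ s, L i)) := by
  classical
  induction s using Finset.induction with
  | empty => simpa using tendsto_const_nhds
  | insert i s hi ih =>
    have hfi := h i (mem_insert_self i s)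
    have hs := ih fun j hj => h j (mem_insert_of_mem hj)
    rw [sum_insert hi, ← mul_one (L i)]
    refine ((hfi.mul (tendsto_one_of_tendsto_mul_sub_one hg hs)).add hs).congr fun x => ?_
    rw [prod_insert hi]
    ring

end

lemma tendsto_mul_prod_div_sqrt_sub_one {ι : Type*} (s : Finset ι) (a : ι → ℝ) (b c : ℝ)
    {κ : ℝ} (hκ : 0 < κ) :
    Tendsto (fun r : ℕ => κ * r *
        (∏ j ∈ s, (κ * r + a j) / √((κ * r + (a j + b)) * (κ * r + (a j + c))) - 1)) atTop
      (𝓝 (#s * (-(b + c) / 2))) := by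
  have hr : Tendsto (fun r : ℕ => κ * r) atTop atTop :=
    tendsto_natCast_atTop_atTop.const_mul_atTop hκ
  rw [← nsmul_eq_mul, ← sum_const]
  refine tendsto_mul_prod_sub_one hr s fun j _ => ?_
  rw [show -(b + c) / 2 = a j - ((a j + b) + (a j + c)) / 2 by ring]
  exact (tendsto_mul_div_sqrt_sub_one (a j + b) (a j + c) (a j)).comp hr

theorem stmt9_general (k l n₀ : ℕ) (hlk : l < k) :
    Filter.Tendsto (fun r : ℕ =>
      (r : ℝ) * (betaKL l k (n₀ + (r + 1) * (k - l)) / betaKL l k (n₀ + (r + 2) * (k - l))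
        - 1 + ((k : ℝ) + l) / (2 * r)))
      Filter.atTop (nhds 0) := by
  set Δ := k - l
  have hΔ : (0 : ℝ) < Δ := Nat.cast_pos.mpr (Nat.sub_pos_of_lt hlk)
  have hlim := ((tendsto_mul_prod_div_sqrt_sub_one (range Δ)
    (fun j => (n₀ + Δ - k + 1 + j : ℝ)) k l hΔ).const_mul (Δ : ℝ)⁻¹).add_const (((k : ℝ) + l) / 2)
  rw [card_range, show (Δ : ℝ)⁻¹ * (Δ * (-(k + l) / 2)) + ((k : ℝ) + l) / 2 = 0 by
    field_simp; ring] at hlim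
  refine hlim.congr' ?_
  filter_upwards [eventually_ge_atTop k] with r hr
  have hr0 : (r : ℝ) ≠ 0 := Nat.cast_ne_zero.mpr (by omega)
  rw [betaKL_div_betaKL_arith k l n₀ Δ r (by nlinarith [Nat.sub_pos_of_lt hlk])]
  field_simp

/-- With `γ_r = β^{lk}_{n₀+rΔ}`:
`γ_{r+1}/γ_{r+2} = 1 − (k+l)/(2r) + o(1/r)` as `r → ∞`. -/
theorem stmt9 (k l n₀ : ℕ) (hlk : l < k) (hn₀l : l ≤ n₀) (hn₀k : n₀ < k) :
    Filter.Tendsto (fun r : ℕ =>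
      (r : ℝ) * (betaKL l k (n₀ + (r + 1) * (k - l)) / betaKL l k (n₀ + (r + 2) * (k - l))
        - 1 + ((k : ℝ) + l) / (2 * r)))
      Filter.atTop (nhds 0) :=
  stmt9_general k l n₀ hlk
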